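/- Let G be the standard Gaussian CDF. Choose b_n such that 1 - G(b_n) = 1/n and set a_n = 1/b_n. Then for all x ∈ ℝ, lim_{n→∞} G^n(a_n x + b_n) = exp(-exp(-x)). -/

import Mathlib

/-!
Integrating by parts against `-φ s / s` gives Mills' bounds
`φ t / t / (1 + t⁻²) ≤ 1 - G t ≤ φ t / t`, so `1 - G t ~ φ t / t` as `t → ∞`.
Since `φ (t + x / t) = φ t * exp (-x - x² / (2 t²))`, this yields
`(1 - G (t + x / t)) / (1 - G t) → exp (-x)`. Along `t = b_n → ∞` the left side is
`n (1 - G (a_n x + b_n))`, and `(1 - λ_n / n) ^ n → exp (-λ)` when `λ_n → λ`.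
-/

open MeasureTheory Filter Topology Real
open ProbabilityTheory Asymptotics Set

local notation "φ" => gaussianPDFReal 0 1

lemma gaussianPDFReal_zero_one_apply (s : ℝ) : φ s = (√(2 * π))⁻¹ * exp (-s ^ 2 / 2) := by
  simp [gaussianPDFReal]

lemma hasDerivAt_gaussianPDFReal_zero_one (s : ℝ) : HasDerivAt φ (-s * φ s) s := by
  have h : HasDerivAt (fun s : ℝ => -s ^ 2 / 2) (-s) s :=
    ((hasDerivAt_pow 2 s).neg.div_const 2).congr_deriv (by push_cast; ring)
  rw [show φ = fun s => (√(2 * π))⁻¹ * exp (-s ^ 2 / 2) from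
    funext gaussianPDFReal_zero_one_apply]
  exact (h.exp.const_mul _).congr_deriv (by ring)

lemma gaussianPDFReal_zero_one_add (t y : ℝ) :
    φ (t + y) = φ t * exp (-(t * y) - y ^ 2 / 2) := by
  rw [gaussianPDFReal_zero_one_apply, gaussianPDFReal_zero_one_apply, mul_assoc, ← exp_add]
  ring_nf

lemma tendsto_gaussianPDFReal_zero_one_atTop : Tendsto φ atTop (𝓝 0) := by
  have h : Tendsto (fun s : ℝ => s ^ 2 / 2) atTop atTop :=
    (tendsto_pow_atTop two_ne_zero).atTop_div_const two_pos
  simpa [funext gaussianPDFReal_zero_one_apply, neg_div] using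
    (tendsto_exp_neg_atTop_nhds_zero.comp h).const_mul (√(2 * π))⁻¹

noncomputable def gaussianTail (t : ℝ) : ℝ := ∫ s in Ioi t, φ s

lemma integral_Iic_add_gaussianTail (t : ℝ) : (∫ s in Iic t, φ s) + gaussianTail t = 1 := by
  rw [gaussianTail, intervalIntegral.integral_Iic_add_Ioi
    (integrable_gaussianPDFReal 0 1).integrableOn (integrable_gaussianPDFReal 0 1).integrableOn,
    integral_gaussianPDFReal_eq_one 0 one_ne_zero]

lemma gaussianTail_pos (t : ℝ) : 0 < gaussianTail t := by
  rw [gaussianTail, setIntegral_pos_iff_support_of_nonneg_ae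
    (.of_forall fun s => gaussianPDFReal_nonneg 0 1 s)
    (integrable_gaussianPDFReal 0 1).integrableOn]
  have : Function.support φ = univ :=
    eq_univ_of_forall fun s => (gaussianPDFReal_pos 0 1 s one_ne_zero).ne'
  simp [this]

lemma gaussianTail_antitone : Antitone gaussianTail := fun _ _ hst =>
  setIntegral_mono_set (integrable_gaussianPDFReal 0 1).integrableOn
    (.of_forall fun s => gaussianPDFReal_nonneg 0 1 s) (Ioi_subset_Ioi hst).eventuallyLE

lemma integrableOn_gaussianPDFReal_mul_one_add_inv_sq {t : ℝ} (ht : 0 < t) :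
    IntegrableOn (fun s => φ s * (1 + (s ^ 2)⁻¹)) (Ioi t) := by
  refine ((integrable_gaussianPDFReal 0 1).integrableOn.mul_const (1 + (t ^ 2)⁻¹)).mono' ?_ ?_
  · exact ((measurable_gaussianPDFReal 0 1).mul (by fun_prop)).aestronglyMeasurable
  · refine (ae_restrict_iff' measurableSet_Ioi).2 (.of_forall fun s hs => ?_)
    have hs : t < s := hs
    rw [Real.norm_of_nonneg (by have := gaussianPDFReal_nonneg 0 1 s; positivity)]
    gcongr
    exact gaussianPDFReal_nonneg 0 1 s

lemma integral_Ioi_gaussianPDFReal_mul_one_add_inv_sq {t : ℝ} (ht : 0 < t) :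
    ∫ s in Ioi t, φ s * (1 + (s ^ 2)⁻¹) = φ t / t := by
  have hderiv : ∀ s ∈ Ici t, HasDerivAt (fun s => -φ s / s) (φ s * (1 + (s ^ 2)⁻¹)) s := by
    intro s hs
    have hs0 : s ≠ 0 := (ht.trans_le hs).ne'
    refine ((hasDerivAt_gaussianPDFReal_zero_one s).neg.div (hasDerivAt_id' s) hs0).congr_deriv ?_
    simp only [Pi.neg_apply]
    field_simp
    ring
  have htend : Tendsto (fun s => -φ s / s) atTop (𝓝 0) :=
    tendsto_gaussianPDFReal_zero_one_atTop.neg.div_atTop tendsto_id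
  simpa [neg_div] using integral_Ioi_of_hasDerivAt_of_tendsto' hderiv
    (integrableOn_gaussianPDFReal_mul_one_add_inv_sq ht) htend

lemma gaussianTail_le_div {t : ℝ} (ht : 0 < t) : gaussianTail t ≤ φ t / t := by
  rw [← integral_Ioi_gaussianPDFReal_mul_one_add_inv_sq ht, gaussianTail]
  refine setIntegral_mono_on (integrable_gaussianPDFReal 0 1).integrableOn ?_ measurableSet_Ioi
    fun s _ => ?_
  · exact integrableOn_gaussianPDFReal_mul_one_add_inv_sq ht
  · have := gaussianPDFReal_nonneg 0 1 s
    nlinarith [inv_nonneg.2 (sq_nonneg s)]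

lemma div_one_add_inv_sq_le_gaussianTail {t : ℝ} (ht : 0 < t) :
    φ t / t / (1 + (t ^ 2)⁻¹) ≤ gaussianTail t := by
  rw [div_le_iff₀ (by positivity), ← integral_Ioi_gaussianPDFReal_mul_one_add_inv_sq ht,
    gaussianTail, ← integral_mul_const]
  refine setIntegral_mono_on ?_ ((integrable_gaussianPDFReal 0 1).integrableOn.mul_const _)
    measurableSet_Ioi fun s hs => ?_
  · exact integrableOn_gaussianPDFReal_mul_one_add_inv_sq ht
  · have hs : t < s := hs
    gcongr
    exact gaussianPDFReal_nonneg 0 1 s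

lemma gaussianTail_isEquivalent : gaussianTail ~[atTop] fun t => φ t / t := by
  refine isEquivalent_of_tendsto_one ?_
  have hlow : Tendsto (fun t : ℝ => (1 + (t ^ 2)⁻¹)⁻¹) atTop (𝓝 1) := by
    simpa using ((tendsto_pow_atTop (α := ℝ) two_ne_zero).inv_tendsto_atTop.const_add 1).inv₀
      (by norm_num)
  refine tendsto_of_tendsto_of_tendsto_of_le_of_le' hlow tendsto_const_nhds ?_ ?_
  · filter_upwards [eventually_gt_atTop 0] with t ht
    have : 0 < φ t / t := div_pos (gaussianPDFReal_pos 0 1 t one_ne_zero) ht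
    rw [Pi.div_apply, le_div_iff₀ this, inv_mul_eq_div]
    exact div_one_add_inv_sq_le_gaussianTail ht
  · filter_upwards [eventually_gt_atTop 0] with t ht
    have : 0 < φ t / t := div_pos (gaussianPDFReal_pos 0 1 t one_ne_zero) ht
    rw [Pi.div_apply, div_le_one this]
    exact gaussianTail_le_div ht

lemma tendsto_gaussianTail_add_div_div (x : ℝ) :
    Tendsto (fun t => gaussianTail (t + x / t) / gaussianTail t) atTop (𝓝 (exp (-x))) := by
  have hshift : Tendsto (fun t : ℝ => t + x / t) atTop atTop :=
    tendsto_id.atTop_add (tendsto_const_nhds.div_atTop tendsto_id)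
  refine ((gaussianTail_isEquivalent.comp_tendsto hshift).div
    gaussianTail_isEquivalent).symm.tendsto_nhds ?_
  have hinv : Tendsto (fun t : ℝ => (t ^ 2)⁻¹) atTop (𝓝 0) :=
    (tendsto_pow_atTop two_ne_zero).inv_tendsto_atTop
  have hlim : Tendsto (fun t : ℝ => exp (-x - x ^ 2 * (t ^ 2)⁻¹ / 2) / (1 + x * (t ^ 2)⁻¹))
      atTop (𝓝 (exp (-x))) := by
    simpa [Pi.div_def] using ((hinv.const_mul (x ^ 2)).div_const 2 |>.const_sub (-x)).rexp.div
      ((hinv.const_mul x).const_add 1) (by norm_num)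
  refine hlim.congr' ?_
  filter_upwards [eventually_gt_atTop 0, eventually_gt_atTop (√|x|)] with t ht hxt
  have hφ : φ (t + x / t) = φ t * exp (-x - x ^ 2 * (t ^ 2)⁻¹ / 2) := by
    rw [gaussianPDFReal_zero_one_add]
    congr 2
    field_simp
  have hden : 0 < t ^ 2 + x := by
    nlinarith [neg_abs_le x, sq_sqrt (abs_nonneg x), sqrt_nonneg |x|]
  have hφt := gaussianPDFReal_pos 0 1 t one_ne_zero
  simp only [Function.comp_apply, Pi.div_apply, hφ]
  field_simp

lemma tendsto_atTop_of_tendsto_gaussianTail {α : Type*} {l : Filter α} {u : α → ℝ}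
    (hu : Tendsto (fun i => gaussianTail (u i)) l (𝓝 0)) : Tendsto u l atTop :=
  tendsto_atTop.2 fun M => by
    filter_upwards [hu.eventually (gt_mem_nhds (gaussianTail_pos M))] with i hi
    exact (gaussianTail_antitone.reflect_lt hi).le

/-- The standard Gaussian distribution is in the max-domain of attraction of the
Gumbel distribution: with `b_n` defined by `1 - G(b_n) = 1/n` and `a_n = 1/b_n`,
`G^n(a_n x + b_n) → exp(-exp(-x))` for all `x`. -/
theorem gaussian_in_gumbel_domain
    (G : ℝ → ℝ)
    (hG : ∀ t : ℝ, G t = ∫ s in Set.Iic t, (Real.sqrt (2 * Real.pi))⁻¹ * Real.exp (-s ^ 2 / 2))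
    (b : ℕ → ℝ) (hb : ∀ n : ℕ, 2 ≤ n → 1 - G (b n) = 1 / n)
    (a : ℕ → ℝ) (hab : ∀ n, a n = (b n)⁻¹) (x : ℝ) :
    Tendsto (fun n : ℕ => (G (a n * x + b n)) ^ n) atTop
      (𝓝 (Real.exp (-Real.exp (-x)))) := by
  have hGQ : ∀ t, G t = 1 - gaussianTail t := fun t => by
    rw [← integral_Iic_add_gaussianTail t, hG]
    simp [gaussianPDFReal_zero_one_apply]
  have hQb : ∀ᶠ n : ℕ in atTop, gaussianTail (b n) = 1 / n := by
    filter_upwards [eventually_ge_atTop 2] with n hn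
    simpa [hGQ] using hb n hn
  have hb_top : Tendsto b atTop atTop :=
    tendsto_atTop_of_tendsto_gaussianTail <|
      tendsto_one_div_atTop_nhds_zero_nat.congr' (hQb.mono fun _ h => h.symm)
  have hn_tail : Tendsto (fun n : ℕ => n * gaussianTail (a n * x + b n)) atTop
      (𝓝 (exp (-x))) := by
    refine ((tendsto_gaussianTail_add_div_div x).comp hb_top).congr' ?_
    filter_upwards [hQb] with n hn
    simp [hn, hab, add_comm, div_eq_inv_mul]
  simpa [hGQ, sub_eq_add_neg] using
    tendsto_one_add_pow_exp_of_tendsto (by simpa using hn_tail.neg)
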